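/- Let j ≥ 0 be an integer and let w : ℝ² → ℝ be continuously differentiable. Suppose u₀ ∈ P_j satisfies ∫_K (w − u₀) p dx dy = 0 for every p ∈ P_j; suppose for each m ∈ {1,2,3,4} that u_{b,m} is a polynomial of degree ≤ j+1 in the coordinate running along F_m with ∫_{F_m} (w − u_{b,m}) p ds = 0 for every univariate polynomial p of degree ≤ j+1; and suppose G ∈ BDM_{j+1}(K) satisfies ∫_K G·q dx dy = −∫_K u₀ (div q) dx dy + Σ_{m=1}^{4} ∫_{F_m} u_{b,m} (q·n_m) ds for every q ∈ BDM_{j+1}(K). Then G is the best L² approximation of ∇w from BDM_{j+1}(K): for every q ∈ BDM_{j+1}(K), ∫_K |G − ∇w|² dx dy ≤ ∫_K |q − ∇w|² dx dy. -/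

import Mathlib

open MeasureTheory MvPolynomial

noncomputable section

/-- Real polynomials in two variables. -/
abbrev Poly2 := MvPolynomial (Fin 2) ℝ

/-- Evaluate a two-variable polynomial at `(x, y)`. -/
def evalP (p : Poly2) (x y : ℝ) : ℝ := MvPolynomial.eval ![x, y] p

/-- `P_r`: total degree `≤ r`. -/
def memP (r : ℕ) (p : Poly2) : Prop := p.totalDegree ≤ r

/-- The divergence of a polynomial vector field. -/
def divP (q : Poly2 × Poly2) : Poly2 := pderiv 0 q.1 + pderiv 1 q.2

/-- The curl of a scalar polynomial: `curl φ = (−∂φ/∂y, ∂φ/∂x)`. -/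
def curlP (φ : Poly2) : Poly2 × Poly2 := (-(pderiv 1 φ), pderiv 0 φ)

/-- The Brezzi–Douglas–Marini space
`BDM_{j+1}(K) = (P_{j+1})² + span{curl (x^{j+2} y), curl (x y^{j+2})}`. -/
def memBDM (j : ℕ) (q : Poly2 × Poly2) : Prop :=
  ∃ (p₁ p₂ : Poly2) (a b : ℝ), memP (j+1) p₁ ∧ memP (j+1) p₂ ∧
    q.1 = p₁ + a • (curlP (X 0 ^ (j+2) * X 1)).1 + b • (curlP (X 0 * X 1 ^ (j+2))).1 ∧
    q.2 = p₂ + a • (curlP (X 0 ^ (j+2) * X 1)).2 + b • (curlP (X 0 * X 1 ^ (j+2))).2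

/-!
Green's formula on `K` gives `∫_K ∇w·q = -∫_K w div q + ∑ₘ ∫_{F_m} w (q·nₘ)`. For `q ∈ BDM_{j+1}(K)`
we have `div q ∈ P_j` (the added fields are curls) and the trace of `q·nₘ` on `F_m` has degree
`≤ j + 1`, so the two projection properties allow replacing `w` by `u₀` and by `u_{b,m}`. The
defining identity of `G` then says that `G - ∇w` is `L²(K)`-orthogonal to `BDM_{j+1}(K)`, and the
best approximation property follows by Pythagoras.
-/

theorem MvPolynomial.pderiv_pderiv_comm {σ R : Type*} [CommSemiring R] (i k : σ)
    (p : MvPolynomial σ R) : pderiv i (pderiv k p) = pderiv k (pderiv i p) := by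
  classical
  induction p using MvPolynomial.induction_on with
  | C a => simp
  | add p q hp hq => simp [hp, hq]
  | mul_X p l hp =>
    simp [Derivation.leibniz, pderiv_X, hp, Pi.single_apply, apply_ite (pderiv _)]
    ring

theorem MvPolynomial.totalDegree_pderiv_le {σ R : Type*} [CommSemiring R] (i : σ)
    {p : MvPolynomial σ R} {n : ℕ} (hp : p.totalDegree ≤ n + 1) :
    (pderiv i p).totalDegree ≤ n := by
  classical
  rw [p.as_sum, map_sum]
  refine totalDegree_finsetSum_le fun m hm => ?_
  rw [pderiv_monomial]
  rcases Nat.eq_zero_or_pos (m i) with h | h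
  · simp [h]
  · refine (totalDegree_monomial_le _ _).trans ?_
    have hm : Finsupp.degree m ≤ n + 1 := (le_totalDegree hm).trans hp
    rw [← tsub_add_cancel_of_le (Finsupp.single_le_iff.2 h : Finsupp.single i 1 ≤ m), map_add,
      Finsupp.degree_single] at hm
    change Finsupp.degree (m - Finsupp.single i 1) ≤ n
    omega

theorem MvPolynomial.derivative_aeval {σ R : Type*} [Fintype σ] [CommRing R]
    (f : σ → Polynomial R) (p : MvPolynomial σ R) :
    Polynomial.derivative (aeval f p)
      = ∑ i, aeval f (pderiv i p) * Polynomial.derivative (f i) := by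
  classical
  induction p using MvPolynomial.induction_on with
  | C a => simp
  | add p q hp hq => simp [hp, hq, add_mul, Finset.sum_add_distrib]
  | mul_X p i hp =>
    simp [hp, pderiv_X, Pi.single_apply, add_mul, Finset.sum_add_distrib, Finset.sum_mul,
      apply_ite (aeval f), ite_mul]
    rw [add_comm]
    exact congrArg _ (Finset.sum_congr rfl fun _ _ => by ring)

theorem MvPolynomial.eval_aeval {σ R : Type*} [CommRing R] (f : σ → Polynomial R) (t : R)
    (p : MvPolynomial σ R) :
    (aeval f p).eval t = eval (fun i => (f i).eval t) p := by
  induction p using MvPolynomial.induction_on with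
  | C a => simp
  | add p q hp hq => simp [hp, hq]
  | mul_X p i hp => simp [hp]

lemma memBDM_sub {j : ℕ} {q q' : Poly2 × Poly2} (hq : memBDM j q) (hq' : memBDM j q') :
    memBDM j (q.1 - q'.1, q.2 - q'.2) := by
  obtain ⟨p₁, p₂, a, b, hp₁, hp₂, h₁, h₂⟩ := hq
  obtain ⟨p₁', p₂', a', b', hp₁', hp₂', h₁', h₂'⟩ := hq'
  refine ⟨p₁ - p₁', p₂ - p₂', a - a', b - b', ?_, ?_, ?_, ?_⟩
  · exact (totalDegree_sub _ _).trans (max_le hp₁ hp₁')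
  · exact (totalDegree_sub _ _).trans (max_le hp₂ hp₂')
  · rw [h₁, h₁']; module
  · rw [h₂, h₂']; module

lemma divP_curlP (φ : Poly2) : divP (curlP φ) = 0 := by
  simp [divP, curlP, pderiv_pderiv_comm (R := ℝ) (1 : Fin 2) 0]

lemma memP_divP {j : ℕ} {q : Poly2 × Poly2} (hq : memBDM j q) : memP j (divP q) := by
  obtain ⟨p₁, p₂, a, b, hp₁, hp₂, h₁, h₂⟩ := hq
  have hdiv : divP q = pderiv 0 p₁ + pderiv 1 p₂ + a • divP (curlP (X 0 ^ (j + 2) * X 1))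
      + b • divP (curlP (X 0 * X 1 ^ (j + 2))) := by
    rw [divP, h₁, h₂, divP, divP]
    simp only [map_add, Derivation.map_smul]
    module
  rw [memP, hdiv, divP_curlP, divP_curlP, smul_zero, smul_zero, add_zero, add_zero]
  exact (totalDegree_add _ _).trans
    (max_le (totalDegree_pderiv_le 0 hp₁) (totalDegree_pderiv_le 1 hp₂))

/-- `y ↦ p (c, y)`, as a polynomial in `y`. -/
def traceX (c : ℝ) : Poly2 →ₐ[ℝ] Polynomial ℝ := aeval ![Polynomial.C c, Polynomial.X]

/-- `x ↦ p (x, c)`, as a polynomial in `x`. -/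
def traceY (c : ℝ) : Poly2 →ₐ[ℝ] Polynomial ℝ := aeval ![Polynomial.X, Polynomial.C c]

lemma eval_traceX (c y : ℝ) (p : Poly2) : (traceX c p).eval y = evalP p c y := by
  rw [traceX, MvPolynomial.eval_aeval, evalP]
  congr 2; funext i; fin_cases i <;> simp

lemma eval_traceY (c x : ℝ) (p : Poly2) : (traceY c p).eval x = evalP p x c := by
  rw [traceY, MvPolynomial.eval_aeval, evalP]
  congr 2; funext i; fin_cases i <;> simp

lemma natDegree_traceX_le (c : ℝ) (p : Poly2) : (traceX c p).natDegree ≤ p.totalDegree :=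
  (aeval_natDegree_le p le_rfl _ fun i => by fin_cases i <;> simp).trans_eq (mul_one _)

lemma natDegree_traceY_le (c : ℝ) (p : Poly2) : (traceY c p).natDegree ≤ p.totalDegree :=
  (aeval_natDegree_le p le_rfl _ fun i => by fin_cases i <;> simp).trans_eq (mul_one _)

lemma derivative_traceX (c : ℝ) (p : Poly2) :
    Polynomial.derivative (traceX c p) = traceX c (pderiv 1 p) := by
  simp [traceX, MvPolynomial.derivative_aeval]

lemma derivative_traceY (c : ℝ) (p : Poly2) :
    Polynomial.derivative (traceY c p) = traceY c (pderiv 0 p) := by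
  simp [traceY, MvPolynomial.derivative_aeval]

-- On a vertical line the first component of `curl φ` is `-∂φ/∂y`, the derivative of the trace of
-- `φ`, and both curls added to `(P_{j+1})²` have traces of degree `≤ j + 2`.
lemma natDegree_traceX_fst_le {j : ℕ} {q : Poly2 × Poly2} (hq : memBDM j q) (c : ℝ) :
    (traceX c q.1).natDegree ≤ j + 1 := by
  obtain ⟨p₁, -, a, b, hp₁, -, hq₁, -⟩ := hq
  have curl_term : ∀ φ : Poly2, (traceX c φ).natDegree ≤ j + 2 → ∀ r : ℝ,
      (r • -Polynomial.derivative (traceX c φ)).natDegree ≤ j + 1 := fun φ hφ r =>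
    (Polynomial.natDegree_smul_le _ _).trans <| (Polynomial.natDegree_neg _).trans_le <|
      (Polynomial.natDegree_derivative_le _).trans (by omega)
  rw [hq₁]
  simp only [curlP, map_add, map_smul, map_neg, ← derivative_traceX]
  exact Polynomial.natDegree_add_le_of_degree_le
    (Polynomial.natDegree_add_le_of_degree_le ((natDegree_traceX_le c p₁).trans hp₁)
      (curl_term _ (by simp [traceX]; compute_degree!) a))
    (curl_term _ (by simp [traceX]; compute_degree!) b)

lemma natDegree_traceY_snd_le {j : ℕ} {q : Poly2 × Poly2} (hq : memBDM j q) (c : ℝ) :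
    (traceY c q.2).natDegree ≤ j + 1 := by
  obtain ⟨-, p₂, a, b, -, hp₂, -, hq₂⟩ := hq
  have curl_term : ∀ φ : Poly2, (traceY c φ).natDegree ≤ j + 2 → ∀ r : ℝ,
      (r • Polynomial.derivative (traceY c φ)).natDegree ≤ j + 1 := fun φ hφ r =>
    (Polynomial.natDegree_smul_le _ _).trans <|
      (Polynomial.natDegree_derivative_le _).trans (by omega)
  rw [hq₂]
  simp only [curlP, map_add, map_smul, ← derivative_traceY]
  exact Polynomial.natDegree_add_le_of_degree_le
    (Polynomial.natDegree_add_le_of_degree_le ((natDegree_traceY_le c p₂).trans hp₂)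
      (curl_term _ (by simp [traceY]; compute_degree!) a))
    (curl_term _ (by simp [traceY]; compute_degree!) b)

lemma hasFDerivAt_evalP (p : Poly2) (z : ℝ × ℝ) :
    HasFDerivAt (fun z : ℝ × ℝ => evalP p z.1 z.2)
      (evalP (pderiv 0 p) z.1 z.2 • ContinuousLinearMap.fst ℝ ℝ ℝ
        + evalP (pderiv 1 p) z.1 z.2 • ContinuousLinearMap.snd ℝ ℝ ℝ) z := by
  induction p using MvPolynomial.induction_on with
  | C a => simpa [evalP] using hasFDerivAt_const a z
  | add p q hp hq =>
    refine ((hp.add hq).congr_fderiv ?_).congr_of_eventuallyEq (.of_forall fun z => ?_)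
    · simp only [evalP, map_add, add_smul]; abel
    · simp [evalP]
  | mul_X p i hp =>
    fin_cases i
    · refine ((hp.mul hasFDerivAt_fst).congr_fderiv ?_).congr_of_eventuallyEq
        (.of_forall fun z => ?_)
      · ext <;> simp [evalP, pderiv_X]
      · simp [evalP]
    · refine ((hp.mul hasFDerivAt_snd).congr_fderiv ?_).congr_of_eventuallyEq
        (.of_forall fun z => ?_)
      · ext <;> simp [evalP, pderiv_X]
      · simp [evalP]

lemma continuous_evalP (p : Poly2) : Continuous fun z : ℝ × ℝ => evalP p z.1 z.2 :=
  continuous_iff_continuousAt.2 fun z => (hasFDerivAt_evalP p z).continuousAt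

@[fun_prop]
lemma Continuous.evalP {α : Type*} [TopologicalSpace α] (p : Poly2) {f g : α → ℝ}
    (hf : Continuous f) (hg : Continuous g) : Continuous fun a => _root_.evalP p (f a) (g a) :=
  ((continuous_evalP p).comp (hf.prodMk hg) :)

lemma Continuous.integrableOn_Icc_prod_Icc {E : Type*} [NormedAddCommGroup E] {f : ℝ × ℝ → E}
    (hf : Continuous f) {x₀ x₁ y₀ y₁ : ℝ} : IntegrableOn f (Set.Icc x₀ x₁ ×ˢ Set.Icc y₀ y₁) := by
  rw [Set.Icc_prod_Icc]
  exact hf.integrableOn_Icc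

/-- `∑ₘ ∫_{F_m} gₘ (q · nₘ) ds` over the four edges of `[x₀, x₁] × [y₀, y₁]`. -/
def boundaryPairing (x₀ x₁ y₀ y₁ : ℝ) (g₁ g₂ g₃ g₄ : ℝ → ℝ) (q : Poly2 × Poly2) : ℝ :=
  (∫ y in y₀..y₁, g₁ y * (-(evalP q.1 x₀ y))) + (∫ y in y₀..y₁, g₂ y * evalP q.1 x₁ y)
    + (∫ x in x₀..x₁, g₃ x * (-(evalP q.2 x y₀))) + (∫ x in x₀..x₁, g₄ x * evalP q.2 x y₁)

lemma integral_grad_dot_eq {x₀ x₁ y₀ y₁ : ℝ} (hx : x₀ ≤ x₁) (hy : y₀ ≤ y₁) {w : ℝ × ℝ → ℝ}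
    (hw : ContDiff ℝ 1 w) (q : Poly2 × Poly2) :
    (∫ z in Set.Icc x₀ x₁ ×ˢ Set.Icc y₀ y₁,
      (fderiv ℝ w z (1, 0) * evalP q.1 z.1 z.2 + fderiv ℝ w z (0, 1) * evalP q.2 z.1 z.2))
    = -(∫ z in Set.Icc x₀ x₁ ×ˢ Set.Icc y₀ y₁, w z * evalP (divP q) z.1 z.2)
      + boundaryPairing x₀ x₁ y₀ y₁ (fun y => w (x₀, y)) (fun y => w (x₁, y))
          (fun x => w (x, y₀)) (fun x => w (x, y₁)) q := by
  have hDw : Continuous (fderiv ℝ w) := hw.continuous_fderiv one_ne_zero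
  have hdw : ∀ z, HasFDerivAt w (fderiv ℝ w z) z := fun z =>
    (hw.differentiable one_ne_zero z).hasFDerivAt
  have hwc := hw.continuous
  have green := integral_divergence_prod_Icc_of_hasFDerivAt_of_le
    (fun z => w z * evalP q.1 z.1 z.2) (fun z => w z * evalP q.2 z.1 z.2)
    (fun z => w z • (evalP (pderiv 0 q.1) z.1 z.2 • ContinuousLinearMap.fst ℝ ℝ ℝ
        + evalP (pderiv 1 q.1) z.1 z.2 • ContinuousLinearMap.snd ℝ ℝ ℝ)
      + evalP q.1 z.1 z.2 • fderiv ℝ w z)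
    (fun z => w z • (evalP (pderiv 0 q.2) z.1 z.2 • ContinuousLinearMap.fst ℝ ℝ ℝ
        + evalP (pderiv 1 q.2) z.1 z.2 • ContinuousLinearMap.snd ℝ ℝ ℝ)
      + evalP q.2 z.1 z.2 • fderiv ℝ w z)
    (x₀, y₀) (x₁, y₁) ⟨hx, hy⟩
    (by fun_prop : Continuous fun z => w z * evalP _ z.1 z.2).continuousOn
    (by fun_prop : Continuous fun z => w z * evalP _ z.1 z.2).continuousOn
    (fun z _ => (hdw z).mul (hasFDerivAt_evalP _ z))
    (fun z _ => (hdw z).mul (hasFDerivAt_evalP _ z))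
    (Continuous.integrableOn_Icc (by fun_prop))
  rw [← Set.Icc_prod_Icc] at green
  rw [eq_neg_add_iff_add_eq, ← integral_add (Continuous.integrableOn_Icc_prod_Icc (by fun_prop))
    (Continuous.integrableOn_Icc_prod_Icc (by fun_prop))]
  convert green using 1
  · congr 1; ext z; simp [divP, evalP]; ring
  · simp only [boundaryPairing, mul_neg, intervalIntegral.integral_neg]; ring

lemma integral_mul_eq_of_integral_sub_mul_eq_zero {α : Type*} [MeasurableSpace α] {μ : Measure α}
    {f g h : α → ℝ} (hf : Integrable (fun x => f x * h x) μ)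
    (hg : Integrable (fun x => g x * h x) μ)
    (h₀ : ∫ x, (f x - g x) * h x ∂μ = 0) :
    ∫ x, g x * h x ∂μ = ∫ x, f x * h x ∂μ := by
  simp only [sub_mul] at h₀
  rw [integral_sub hf hg] at h₀
  linarith

lemma intervalIntegral_mul_eq_of_integral_sub_mul_eq_zero {a b : ℝ} {f g h : ℝ → ℝ}
    (hf : IntervalIntegrable (fun x => f x * h x) volume a b)
    (hg : IntervalIntegrable (fun x => g x * h x) volume a b)
    (h₀ : ∫ x in a..b, (f x - g x) * h x = 0) :
    ∫ x in a..b, g x * h x = ∫ x in a..b, f x * h x := by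
  simp only [sub_mul] at h₀
  rw [intervalIntegral.integral_sub hf hg] at h₀
  linarith

lemma boundaryPairing_eq_of_edge_projections {j : ℕ} {x₀ x₁ y₀ y₁ : ℝ} {w : ℝ × ℝ → ℝ}
    (hw : Continuous w) {ub₁ ub₂ ub₃ ub₄ : Polynomial ℝ}
    (hub₁ : ∀ p : Polynomial ℝ, p.natDegree ≤ j + 1 →
      (∫ y in y₀..y₁, (w (x₀, y) - ub₁.eval y) * p.eval y) = 0)
    (hub₂ : ∀ p : Polynomial ℝ, p.natDegree ≤ j + 1 →
      (∫ y in y₀..y₁, (w (x₁, y) - ub₂.eval y) * p.eval y) = 0)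
    (hub₃ : ∀ p : Polynomial ℝ, p.natDegree ≤ j + 1 →
      (∫ x in x₀..x₁, (w (x, y₀) - ub₃.eval x) * p.eval x) = 0)
    (hub₄ : ∀ p : Polynomial ℝ, p.natDegree ≤ j + 1 →
      (∫ x in x₀..x₁, (w (x, y₁) - ub₄.eval x) * p.eval x) = 0)
    {q : Poly2 × Poly2} (hq : memBDM j q) :
    boundaryPairing x₀ x₁ y₀ y₁ ub₁.eval ub₂.eval ub₃.eval ub₄.eval q
      = boundaryPairing x₀ x₁ y₀ y₁ (fun y => w (x₀, y)) (fun y => w (x₁, y))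
          (fun x => w (x, y₀)) (fun x => w (x, y₁)) q := by
  have edge : ∀ {a b : ℝ} {f u r : ℝ → ℝ}, Continuous f → Continuous u → Continuous r →
      ∫ t in a..b, (f t - u t) * r t = 0 → ∫ t in a..b, u t * r t = ∫ t in a..b, f t * r t :=
    fun hf hu hr h₀ => intervalIntegral_mul_eq_of_integral_sub_mul_eq_zero
      ((hf.mul hr).intervalIntegrable _ _) ((hu.mul hr).intervalIntegrable _ _) h₀
  unfold boundaryPairing
  congr 1; congr 1; congr 1
  · exact edge (by fun_prop) (by fun_prop) (by fun_prop) (by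
      simpa [eval_traceX] using
        hub₁ (-traceX x₀ q.1) (by simpa using natDegree_traceX_fst_le hq x₀))
  · exact edge (by fun_prop) (by fun_prop) (by fun_prop)
      (by simpa [eval_traceX] using hub₂ (traceX x₁ q.1) (natDegree_traceX_fst_le hq x₁))
  · exact edge (by fun_prop) (by fun_prop) (by fun_prop) (by
      simpa [eval_traceY] using
        hub₃ (-traceY y₀ q.2) (by simpa using natDegree_traceY_snd_le hq y₀))
  · exact edge (by fun_prop) (by fun_prop) (by fun_prop)
      (by simpa [eval_traceY] using hub₄ (traceY y₁ q.2) (natDegree_traceY_snd_le hq y₁))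

lemma integral_sq_add_sq_le_of_integral_mul_sub_eq_zero {α : Type*} [MeasurableSpace α]
    {μ : Measure α} {a₁ a₂ c₁ c₂ : α → ℝ}
    (ha : Integrable (fun x => a₁ x ^ 2 + a₂ x ^ 2) μ)
    (hc : Integrable (fun x => c₁ x ^ 2 + c₂ x ^ 2) μ)
    (hac : Integrable (fun x => a₁ x * (c₁ x - a₁ x) + a₂ x * (c₂ x - a₂ x)) μ)
    (horth : ∫ x, (a₁ x * (c₁ x - a₁ x) + a₂ x * (c₂ x - a₂ x)) ∂μ = 0) :
    ∫ x, (a₁ x ^ 2 + a₂ x ^ 2) ∂μ ≤ ∫ x, (c₁ x ^ 2 + c₂ x ^ 2) ∂μ := by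
  have key : ∫ x, (a₁ x ^ 2 + a₂ x ^ 2 + 2 * (a₁ x * (c₁ x - a₁ x) + a₂ x * (c₂ x - a₂ x))) ∂μ
      ≤ ∫ x, (c₁ x ^ 2 + c₂ x ^ 2) ∂μ :=
    integral_mono (ha.add (hac.const_mul 2)) hc fun x => by
      nlinarith [sq_nonneg (c₁ x - a₁ x), sq_nonneg (c₂ x - a₂ x)]
  rwa [integral_add ha (hac.const_mul 2), integral_const_mul, horth, mul_zero, add_zero] at key

lemma integral_sub_grad_dot_eq_zero {j : ℕ} {x₀ x₁ y₀ y₁ : ℝ} (hx : x₀ ≤ x₁) (hy : y₀ ≤ y₁)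
    {w : ℝ × ℝ → ℝ} (hw : ContDiff ℝ 1 w) {u₀ : Poly2}
    (hu₀proj : ∀ p : Poly2, memP j p →
      (∫ z in Set.Icc x₀ x₁ ×ˢ Set.Icc y₀ y₁, (w z - evalP u₀ z.1 z.2) * evalP p z.1 z.2) = 0)
    {ub₁ ub₂ ub₃ ub₄ : Polynomial ℝ}
    (hub₁ : ∀ p : Polynomial ℝ, p.natDegree ≤ j + 1 →
      (∫ y in y₀..y₁, (w (x₀, y) - ub₁.eval y) * p.eval y) = 0)
    (hub₂ : ∀ p : Polynomial ℝ, p.natDegree ≤ j + 1 →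
      (∫ y in y₀..y₁, (w (x₁, y) - ub₂.eval y) * p.eval y) = 0)
    (hub₃ : ∀ p : Polynomial ℝ, p.natDegree ≤ j + 1 →
      (∫ x in x₀..x₁, (w (x, y₀) - ub₃.eval x) * p.eval x) = 0)
    (hub₄ : ∀ p : Polynomial ℝ, p.natDegree ≤ j + 1 →
      (∫ x in x₀..x₁, (w (x, y₁) - ub₄.eval x) * p.eval x) = 0)
    {G : Poly2 × Poly2}
    (hGdef : ∀ q : Poly2 × Poly2, memBDM j q →
      (∫ z in Set.Icc x₀ x₁ ×ˢ Set.Icc y₀ y₁,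
        (evalP G.1 z.1 z.2 * evalP q.1 z.1 z.2 + evalP G.2 z.1 z.2 * evalP q.2 z.1 z.2))
      = -(∫ z in Set.Icc x₀ x₁ ×ˢ Set.Icc y₀ y₁, evalP u₀ z.1 z.2 * evalP (divP q) z.1 z.2)
        + boundaryPairing x₀ x₁ y₀ y₁ ub₁.eval ub₂.eval ub₃.eval ub₄.eval q)
    {d : Poly2 × Poly2} (hd : memBDM j d) :
    (∫ z in Set.Icc x₀ x₁ ×ˢ Set.Icc y₀ y₁,
      ((evalP G.1 z.1 z.2 - fderiv ℝ w z (1, 0)) * evalP d.1 z.1 z.2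
        + (evalP G.2 z.1 z.2 - fderiv ℝ w z (0, 1)) * evalP d.2 z.1 z.2)) = 0 := by
  have hDw : Continuous (fderiv ℝ w) := hw.continuous_fderiv one_ne_zero
  have hwc := hw.continuous
  have hG := hGdef d hd
  rw [integral_mul_eq_of_integral_sub_mul_eq_zero
      (Continuous.integrableOn_Icc_prod_Icc (by fun_prop))
      (Continuous.integrableOn_Icc_prod_Icc (by fun_prop)) (hu₀proj _ (memP_divP hd)),
    boundaryPairing_eq_of_edge_projections hwc hub₁ hub₂ hub₃ hub₄ hd,
    ← integral_grad_dot_eq hx hy hw, ← sub_eq_zero,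
    ← integral_sub (Continuous.integrableOn_Icc_prod_Icc (by fun_prop))
      (Continuous.integrableOn_Icc_prod_Icc (by fun_prop))] at hG
  refine Eq.trans ?_ hG
  congr 1; ext z; ring

theorem statement5_general (j : ℕ) (x₀ x₁ y₀ y₁ : ℝ) (hx : x₀ < x₁) (hy : y₀ < y₁)
    (w : ℝ × ℝ → ℝ) (hw : ContDiff ℝ 1 w)
    (u₀ : Poly2)
    (hu₀proj : ∀ p : Poly2, memP j p →
      (∫ z in Set.Icc x₀ x₁ ×ˢ Set.Icc y₀ y₁, (w z - evalP u₀ z.1 z.2) * evalP p z.1 z.2) = 0)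
    (ub₁ ub₂ ub₃ ub₄ : Polynomial ℝ)
    (hub₁ : ∀ p : Polynomial ℝ, p.natDegree ≤ j + 1 →
      (∫ y in y₀..y₁, (w (x₀, y) - ub₁.eval y) * p.eval y) = 0)
    (hub₂ : ∀ p : Polynomial ℝ, p.natDegree ≤ j + 1 →
      (∫ y in y₀..y₁, (w (x₁, y) - ub₂.eval y) * p.eval y) = 0)
    (hub₃ : ∀ p : Polynomial ℝ, p.natDegree ≤ j + 1 →
      (∫ x in x₀..x₁, (w (x, y₀) - ub₃.eval x) * p.eval x) = 0)
    (hub₄ : ∀ p : Polynomial ℝ, p.natDegree ≤ j + 1 →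
      (∫ x in x₀..x₁, (w (x, y₁) - ub₄.eval x) * p.eval x) = 0)
    (G : Poly2 × Poly2) (hG : memBDM j G)
    (hGdef : ∀ q : Poly2 × Poly2, memBDM j q →
      (∫ z in Set.Icc x₀ x₁ ×ˢ Set.Icc y₀ y₁,
        (evalP G.1 z.1 z.2 * evalP q.1 z.1 z.2 + evalP G.2 z.1 z.2 * evalP q.2 z.1 z.2))
      = -(∫ z in Set.Icc x₀ x₁ ×ˢ Set.Icc y₀ y₁, evalP u₀ z.1 z.2 * evalP (divP q) z.1 z.2)
        + ((∫ y in y₀..y₁, ub₁.eval y * (-(evalP q.1 x₀ y)))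
          + (∫ y in y₀..y₁, ub₂.eval y * evalP q.1 x₁ y)
          + (∫ x in x₀..x₁, ub₃.eval x * (-(evalP q.2 x y₀)))
          + (∫ x in x₀..x₁, ub₄.eval x * evalP q.2 x y₁))) :
    ∀ q : Poly2 × Poly2, memBDM j q →
      (∫ z in Set.Icc x₀ x₁ ×ˢ Set.Icc y₀ y₁,
        ((evalP G.1 z.1 z.2 - fderiv ℝ w z (1, 0)) ^ 2
          + (evalP G.2 z.1 z.2 - fderiv ℝ w z (0, 1)) ^ 2))
      ≤ ∫ z in Set.Icc x₀ x₁ ×ˢ Set.Icc y₀ y₁,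
        ((evalP q.1 z.1 z.2 - fderiv ℝ w z (1, 0)) ^ 2
          + (evalP q.2 z.1 z.2 - fderiv ℝ w z (0, 1)) ^ 2) := by
  intro q hq
  have horth := integral_sub_grad_dot_eq_zero hx.le hy.le hw hu₀proj hub₁ hub₂ hub₃ hub₄ hGdef
    (memBDM_sub hq hG)
  have hDw : Continuous (fderiv ℝ w) := hw.continuous_fderiv one_ne_zero
  refine integral_sq_add_sq_le_of_integral_mul_sub_eq_zero
    (Continuous.integrableOn_Icc_prod_Icc (by fun_prop))
    (Continuous.integrableOn_Icc_prod_Icc (by fun_prop))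
    (Continuous.integrableOn_Icc_prod_Icc (by fun_prop)) (.trans ?_ horth)
  congr 1; ext z; simp only [evalP, map_sub]; ring

/-- If `u₀` is the `L²(K)`-projection of `w` onto `P_j`, each `u_{b,m}` is the
`L²(F_m)`-projection of `w` onto polynomials of degree `≤ j+1` on the edge `F_m`, and
`G ∈ BDM_{j+1}(K)` is the associated discrete weak gradient, then `G` is the best `L²(K)` approximation
of `∇w` from `BDM_{j+1}(K)`. -/
theorem statement5 (j : ℕ) (x₀ x₁ y₀ y₁ : ℝ) (hx : x₀ < x₁) (hy : y₀ < y₁)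
    (w : ℝ × ℝ → ℝ) (hw : ContDiff ℝ 1 w)
    (u₀ : Poly2) (hu₀ : memP j u₀)
    (hu₀proj : ∀ p : Poly2, memP j p →
      (∫ z in Set.Icc x₀ x₁ ×ˢ Set.Icc y₀ y₁, (w z - evalP u₀ z.1 z.2) * evalP p z.1 z.2) = 0)
    (ub₁ ub₂ ub₃ ub₄ : Polynomial ℝ)
    (hb₁ : ub₁.natDegree ≤ j + 1) (hb₂ : ub₂.natDegree ≤ j + 1)
    (hb₃ : ub₃.natDegree ≤ j + 1) (hb₄ : ub₄.natDegree ≤ j + 1)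
    (hub₁ : ∀ p : Polynomial ℝ, p.natDegree ≤ j + 1 →
      (∫ y in y₀..y₁, (w (x₀, y) - ub₁.eval y) * p.eval y) = 0)
    (hub₂ : ∀ p : Polynomial ℝ, p.natDegree ≤ j + 1 →
      (∫ y in y₀..y₁, (w (x₁, y) - ub₂.eval y) * p.eval y) = 0)
    (hub₃ : ∀ p : Polynomial ℝ, p.natDegree ≤ j + 1 →
      (∫ x in x₀..x₁, (w (x, y₀) - ub₃.eval x) * p.eval x) = 0)
    (hub₄ : ∀ p : Polynomial ℝ, p.natDegree ≤ j + 1 →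
      (∫ x in x₀..x₁, (w (x, y₁) - ub₄.eval x) * p.eval x) = 0)
    (G : Poly2 × Poly2) (hG : memBDM j G)
    (hGdef : ∀ q : Poly2 × Poly2, memBDM j q →
      (∫ z in Set.Icc x₀ x₁ ×ˢ Set.Icc y₀ y₁,
        (evalP G.1 z.1 z.2 * evalP q.1 z.1 z.2 + evalP G.2 z.1 z.2 * evalP q.2 z.1 z.2))
      = -(∫ z in Set.Icc x₀ x₁ ×ˢ Set.Icc y₀ y₁, evalP u₀ z.1 z.2 * evalP (divP q) z.1 z.2)
        + ((∫ y in y₀..y₁, ub₁.eval y * (-(evalP q.1 x₀ y)))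
          + (∫ y in y₀..y₁, ub₂.eval y * evalP q.1 x₁ y)
          + (∫ x in x₀..x₁, ub₃.eval x * (-(evalP q.2 x y₀)))
          + (∫ x in x₀..x₁, ub₄.eval x * evalP q.2 x y₁))) :
    ∀ q : Poly2 × Poly2, memBDM j q →
      (∫ z in Set.Icc x₀ x₁ ×ˢ Set.Icc y₀ y₁,
        ((evalP G.1 z.1 z.2 - fderiv ℝ w z (1, 0)) ^ 2
          + (evalP G.2 z.1 z.2 - fderiv ℝ w z (0, 1)) ^ 2))
      ≤ ∫ z in Set.Icc x₀ x₁ ×ˢ Set.Icc y₀ y₁,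
        ((evalP q.1 z.1 z.2 - fderiv ℝ w z (1, 0)) ^ 2
          + (evalP q.2 z.1 z.2 - fderiv ℝ w z (0, 1)) ^ 2) :=
  statement5_general j x₀ x₁ y₀ y₁ hx hy w hw u₀ hu₀proj ub₁ ub₂ ub₃ ub₄ hub₁ hub₂ hub₃ hub₄ G hG
    hGdef
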